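/- arXiv:2502.07379 — 4 statements merged into one kernel-verified Lean document; each statement's English description precedes it below -/
import Mathlib

section
/- Let n be a positive even natural number such that the binary expansion of n contains no two consecutive 1's (i.e., for all j, not (Nat.testBit n j = true and Nat.testBit n (j+1) = true)). Let p be the largest natural number such that 2^p divides n (so p >= 1), let r satisfy 2^r <= n < 2^(r+1), set m = 2^(r+1) - 1 - n and alpha = n/2 - 2^(p-1). Then choose(m, i) is odd for every i with alpha <= i <= alpha + 2^p - 1, and choose(m, alpha + 2^p) is even. -/
/-! By Lucas's theorem mod 2, `choose m i` is odd iff the binary digits of `i` form a submask of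
those of `m`, and below `r + 1` the digits of `m = 2^(r+1) - 1 - n` are the complements of those
of `n`. Writing `n = 2^(p+1) u + 2^p` gives `alpha = 2^p u`, so the interval consists of the `i`
with `i / 2^p = u`. The digits of such `i` below `p` are free, and `n` has zeros there; the digit
of `i` at `j ≥ p` is the digit of `n` at `j + 1`, and when that is a one the digit of `n` at `j`
is a zero, because `n` has no two consecutive ones. Finally `u` is even, since `n` has a zero at
`p + 1`, so `alpha + 2^p = 2^p (u + 1)` has a one at `p`, where `m` has a zero. -/

theorem odd_choose_iff_testBit_imp (m i : ℕ) :
    Odd (m.choose i) ↔ ∀ j, i.testBit j = true → m.testBit j = true := by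
  induction i using Nat.strong_induction_on generalizing m with
  | _ i ih =>
    rcases Nat.eq_zero_or_pos i with rfl | hi
    · simp
    have : Fact (Nat.Prime 2) := ⟨Nat.prime_two⟩
    have lucas : m.choose i % 2 = (m % 2).choose (i % 2) * (m / 2).choose (i / 2) % 2 :=
      Choose.choose_modEq_choose_mod_mul_choose_div_nat
    have base : Odd ((m % 2).choose (i % 2)) ↔ (i.testBit 0 = true → m.testBit 0 = true) := by
      rcases Nat.mod_two_eq_zero_or_one m with hm | hm <;>
        rcases Nat.mod_two_eq_zero_or_one i with hi | hi <;> simp [hm, hi, Nat.testBit_zero]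
    rw [Nat.odd_iff, lucas, ← Nat.odd_iff, Nat.odd_mul, base,
      ih (i / 2) (Nat.div_lt_self hi one_lt_two)]
    simp only [← Nat.testBit_succ]
    exact ⟨fun ⟨h0, hs⟩ j => j.casesOn h0 hs, fun h => ⟨h 0, fun j => h (j + 1)⟩⟩

theorem even_choose_of_testBit {m i j : ℕ} (hi : i.testBit j = true) (hm : m.testBit j = false) :
    Even (m.choose i) := by
  rw [← Nat.not_odd_iff_even, odd_choose_iff_testBit_imp]
  exact fun h => by simp [h j hi] at hm

theorem testBit_two_pow_sub_one_sub {n k : ℕ} (hn : n < 2 ^ k) (j : ℕ) :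
    (2 ^ k - 1 - n).testBit j = (decide (j < k) && !n.testBit j) := by
  rw [Nat.sub_sub, Nat.add_comm, Nat.testBit_two_pow_sub_succ hn]

theorem testBit_eq_false_of_two_pow_dvd {n p j : ℕ} (hp : 2 ^ p ∣ n) (hj : j < p) :
    n.testBit j = false := by
  obtain ⟨k, rfl⟩ := hp
  simp [Nat.testBit_two_pow_mul, hj]

theorem mod_two_pow_succ_eq_of_dvd_of_not_dvd {n p : ℕ} (hp : 2 ^ p ∣ n)
    (hp' : ¬ 2 ^ (p + 1) ∣ n) :
    n % 2 ^ (p + 1) = 2 ^ p := by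
  obtain ⟨c, hc⟩ : 2 ^ p ∣ n % 2 ^ (p + 1) := (Nat.dvd_mod_iff (pow_dvd_pow 2 p.le_succ)).2 hp
  have hlt : 2 ^ p * c < 2 ^ p * 2 := by
    rw [← hc, ← pow_succ]; exact Nat.mod_lt _ (by positivity)
  have hc0 : c ≠ 0 := by
    rintro rfl; exact hp' (Nat.dvd_of_mod_eq_zero hc)
  have : c = 1 := by have := Nat.lt_of_mul_lt_mul_left hlt; omega
  rw [hc, this, mul_one]

theorem testBit_eq_true_of_dvd_of_not_dvd {n p : ℕ} (hp : 2 ^ p ∣ n)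
    (hp' : ¬ 2 ^ (p + 1) ∣ n) :
    n.testBit p = true := by
  have := Nat.testBit_mod_two_pow n (p + 1) p
  rw [mod_two_pow_succ_eq_of_dvd_of_not_dvd hp hp', Nat.testBit_two_pow_self] at this
  simpa using this.symm

theorem odd_choose_two_pow_sub_one_sub {n p r i : ℕ}
    (hnc : ∀ j : ℕ, ¬(n.testBit j = true ∧ n.testBit (j + 1) = true))
    (hp : 2 ^ p ∣ n) (hpr : p ≤ r + 1) (hn : n < 2 ^ (r + 1))
    (hi : i / 2 ^ p = n / 2 ^ (p + 1)) :
    Odd ((2 ^ (r + 1) - 1 - n).choose i) := by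
  rw [odd_choose_iff_testBit_imp]
  intro j hj
  rw [testBit_two_pow_sub_one_sub hn]
  by_cases hjp : j < p
  · simp only [testBit_eq_false_of_two_pow_dvd hp hjp, Bool.not_false, Bool.and_true,
      decide_eq_true_eq]
    omega
  have hnj1 : n.testBit (j + 1) = true := by
    have := Nat.testBit_div_two_pow (n := p) i (j - p)
    rwa [hi, Nat.testBit_div_two_pow, Nat.sub_add_cancel (by omega),
      show j - p + (p + 1) = j + 1 by omega, hj] at this
  have hjr : j + 1 < r + 1 :=
    (Nat.pow_lt_pow_iff_right one_lt_two).1 (lt_of_le_of_lt (Nat.ge_two_pow_of_testBit hnj1) hn)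
  have hnj : n.testBit j = false := by simpa [hnj1] using hnc j
  simp only [hnj, Bool.not_false, Bool.and_true, decide_eq_true_eq]
  omega

theorem even_choose_two_pow_sub_one_sub {n p r : ℕ} (hn : n < 2 ^ (r + 1))
    (hbit : n.testBit p = true) (hbit' : n.testBit (p + 1) = false) :
    Even ((2 ^ (r + 1) - 1 - n).choose (2 ^ p * (n / 2 ^ (p + 1) + 1))) := by
  have hu : n / 2 ^ (p + 1) % 2 = 0 := by
    have := Nat.testBit_div_two_pow (n := p + 1) n 0
    rw [zero_add, hbit', Nat.testBit_zero] at this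
    simpa using this
  refine even_choose_of_testBit (j := p) ?_ ?_
  · simp [Nat.testBit_two_pow_mul, Nat.testBit_zero, Nat.add_mod, hu]
  · simp [testBit_two_pow_sub_one_sub hn, hbit]

theorem interval_of_ones_general (n p r : ℕ) (hn : 0 < n)
    (hnoconsec : ∀ j : ℕ, ¬(Nat.testBit n j = true ∧ Nat.testBit n (j + 1) = true))
    (hp : 2 ^ p ∣ n) (hp' : ¬ 2 ^ (p + 1) ∣ n) (hp1 : 1 ≤ p)
    (hr' : n < 2 ^ (r + 1))
    (m alpha : ℕ) (hm : m = 2 ^ (r + 1) - 1 - n) (halpha : alpha = n / 2 - 2 ^ (p - 1)) :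
    (∀ i : ℕ, alpha ≤ i → i ≤ alpha + 2 ^ p - 1 → Odd (Nat.choose m i)) ∧
      Even (Nat.choose m (alpha + 2 ^ p)) := by
  subst hm
  set u := n / 2 ^ (p + 1)
  have hpr : p ≤ r + 1 :=
    ((Nat.pow_lt_pow_iff_right one_lt_two).1 (lt_of_le_of_lt (Nat.le_of_dvd hn hp) hr')).le
  have hn_eq : n = 2 ^ (p + 1) * u + 2 ^ p := by
    rw [← mod_two_pow_succ_eq_of_dvd_of_not_dvd hp hp', Nat.div_add_mod]
  have h2p : 2 ^ p = 2 * 2 ^ (p - 1) := by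
    rw [← pow_succ', Nat.sub_add_cancel hp1]
  have halpha_eq : alpha = 2 ^ p * u := by
    have : n / 2 = 2 ^ p * u + 2 ^ (p - 1) :=
      Nat.div_eq_of_eq_mul_left two_pos (by rw [hn_eq, pow_succ, h2p]; ring)
    omega
  have hbit := testBit_eq_true_of_dvd_of_not_dvd hp hp'
  refine ⟨fun i h₁ h₂ => odd_choose_two_pow_sub_one_sub hnoconsec hp hpr hr' ?_, ?_⟩
  · have := Nat.two_pow_pos p
    exact Nat.div_eq_of_lt_le (by rwa [mul_comm, ← halpha_eq])
      (by rw [add_mul, one_mul, mul_comm, ← halpha_eq]; omega)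
  · rw [halpha_eq, ← mul_add_one]
    exact even_choose_two_pow_sub_one_sub hr' hbit (by simpa [hbit] using hnoconsec p)

/-- Corollary 5.6: for even `n > 0` with no two consecutive binary 1's,
`p` the 2-adic valuation of `n`, `2^r ≤ n < 2^(r+1)`, `m = 2^(r+1) - 1 - n` and
`alpha = n/2 - 2^(p-1)`, the coefficients `choose m i` are odd for
`alpha ≤ i ≤ alpha + 2^p - 1`, and `choose m (alpha + 2^p)` is even. -/
theorem interval_of_ones (n p r : ℕ) (hn : 0 < n) (heven : 2 ∣ n)
    (hnoconsec : ∀ j : ℕ, ¬(Nat.testBit n j = true ∧ Nat.testBit n (j + 1) = true))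
    (hp : 2 ^ p ∣ n) (hp' : ¬ 2 ^ (p + 1) ∣ n) (hp1 : 1 ≤ p)
    (hr : 2 ^ r ≤ n) (hr' : n < 2 ^ (r + 1))
    (m alpha : ℕ) (hm : m = 2 ^ (r + 1) - 1 - n) (halpha : alpha = n / 2 - 2 ^ (p - 1)) :
    (∀ i : ℕ, alpha ≤ i → i ≤ alpha + 2 ^ p - 1 → Odd (Nat.choose m i)) ∧
      Even (Nat.choose m (alpha + 2 ^ p)) :=
  interval_of_ones_general n p r hn hnoconsec hp hp' hp1 hr' m alpha hm halpha
end

section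
/- Let n be a positive natural number with n congruent to 2 modulo 4 whose binary expansion contains no two consecutive 1's. Let r satisfy 2^r <= n < 2^(r+1) and set m = 2^(r+1) - 1 - n. Then the number choose(m, n/2) * choose(m, n/2) + choose(m, n/2 - 1) * choose(m, n/2 + 1) is odd; consequently, n/2 is the least natural number L such that for every j >= L with 2j + 2 <= n, choose(m, j+1)*choose(m, j+1) + choose(m, j)*choose(m, j+2) is even. -/
/-!
Since `m + n = 2 ^ (r + 1) - 1`, the binary digits of `m` are exactly those of `n` below `r + 1`
flipped, and by Lucas' theorem mod 2, `choose m k` is odd iff every binary digit of `k` lies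
outside those of `n`. The digits of `n / 2` are those of `n` shifted down by one, so they avoid the
digits of `n` when `n` has no two consecutive 1's, and `choose m (n / 2)` is odd. As `n ≡ 2 mod 8`,
both `n` and `n / 2 + 1` have digit 1 set, so `choose m (n / 2 + 1)` is even. Hence the coefficient
at `j = n / 2 - 1` is odd, while for `j ≥ n / 2` the constraint `2 * j + 2 ≤ n` is never met.
-/

namespace Nat

theorem odd_choose_iff_testBit (n k : ℕ) :
    Odd (n.choose k) ↔ ∀ i, k.testBit i = true → n.testBit i = true := by
  induction n using Nat.strong_induction_on generalizing k with
  | _ n ih =>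
  rcases n.eq_zero_or_pos with rfl | hn
  · have hk : Odd (choose 0 k) ↔ k = 0 := by
      rcases k.eq_zero_or_pos with rfl | hk
      · simp
      · simp [choose_eq_zero_of_lt hk, hk.ne']
    simp only [hk, zero_testBit, Bool.false_eq_true, imp_false, Bool.not_eq_true]
    exact ⟨fun h => h ▸ fun _ => zero_testBit _, zero_of_testBit_eq_false⟩
  · -- Lucas' theorem for `p = 2` splits off the lowest binary digit.
    have hlucas : Odd (n.choose k) ↔
        Odd ((n % 2).choose (k % 2)) ∧ Odd ((n / 2).choose (k / 2)) := by
      rw [← odd_mul, odd_iff, odd_iff,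
        ← @Choose.choose_modEq_choose_mod_mul_choose_div_nat n k 2 ⟨prime_two⟩]
    have hlow : Odd ((n % 2).choose (k % 2)) ↔ (k.testBit 0 = true → n.testBit 0 = true) := by
      rcases mod_two_eq_zero_or_one n with hn2 | hn2 <;>
        rcases mod_two_eq_zero_or_one k with hk2 | hk2 <;> simp [hn2, hk2]
    rw [hlucas, hlow, ih (n / 2) (by omega)]
    simp only [testBit_div_two]
    constructor
    · rintro ⟨h0, hs⟩ (_ | i)
      exacts [h0, hs i]
    · exact fun h => ⟨h 0, fun i => h (i + 1)⟩

theorem testBit_one_of_mod_four_eq_two {n : ℕ} (h : n % 4 = 2) : n.testBit 1 = true := by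
  simp only [testBit_eq_decide_div_mod_eq, pow_one, decide_eq_true_eq]
  omega

theorem even_choose_of_testBit {n k i : ℕ} (hk : k.testBit i = true) (hn : n.testBit i = false) :
    Even (n.choose k) := by
  rw [← not_odd_iff_even, odd_choose_iff_testBit]
  exact fun h => by simp [h i hk] at hn

theorem odd_choose_two_pow_sub_succ_div_two {w n : ℕ} (hn : n < 2 ^ w)
    (hsep : ∀ j, ¬(n.testBit j = true ∧ n.testBit (j + 1) = true)) :
    Odd ((2 ^ w - (n + 1)).choose (n / 2)) := by
  rw [odd_choose_iff_testBit]
  intro i hi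
  rw [testBit_div_two] at hi
  have hiw : i + 1 < w :=
    (Nat.pow_lt_pow_iff_right (by norm_num)).mp ((ge_two_pow_of_testBit hi).trans_lt hn)
  have hni : n.testBit i = false := by simpa [hi] using hsep i
  simp [testBit_two_pow_sub_succ hn, hni, show i < w by omega]

theorem even_choose_two_pow_sub_succ_div_two_add_one {w n : ℕ} (hn : n < 2 ^ w)
    (h8 : n % 8 = 2) : Even ((2 ^ w - (n + 1)).choose (n / 2 + 1)) := by
  refine even_choose_of_testBit (testBit_one_of_mod_four_eq_two (n := n / 2 + 1) (by omega)) ?_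
  simp [testBit_two_pow_sub_succ hn, testBit_one_of_mod_four_eq_two (n := n) (by omega)]

end Nat

theorem isLeast_div_two_of_odd {f : ℕ → ℕ} {n : ℕ} (h : Odd (f (n / 2 - 1))) :
    IsLeast {L | ∀ j, L ≤ j → 2 * j + 2 ≤ n → Even (f j)} (n / 2) := by
  refine ⟨fun j hj hjn => by omega, fun L hL => ?_⟩
  by_contra! hlt
  exact Nat.not_even_iff_odd.mpr h (hL (n / 2 - 1) (by omega) (by omega))

theorem fold_thom_bound_case_a_p1_general (n r : ℕ) (hmod : n % 4 = 2)
    (hnoconsec : ∀ j : ℕ, ¬(Nat.testBit n j = true ∧ Nat.testBit n (j + 1) = true))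
    (hr' : n < 2 ^ (r + 1))
    (m : ℕ) (hm : m = 2 ^ (r + 1) - 1 - n) :
    Odd (Nat.choose m (n / 2) * Nat.choose m (n / 2) +
        Nat.choose m (n / 2 - 1) * Nat.choose m (n / 2 + 1)) ∧
      IsLeast {L : ℕ | ∀ j : ℕ, L ≤ j → 2 * j + 2 ≤ n →
        Even (Nat.choose m (j + 1) * Nat.choose m (j + 1) +
          Nat.choose m j * Nat.choose m (j + 2))} (n / 2) := by
  obtain rfl : m = 2 ^ (r + 1) - (n + 1) := by omega
  have h8 : n % 8 = 2 := by
    have h2 : n.testBit 2 = false := by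
      simpa [Nat.testBit_one_of_mod_four_eq_two hmod] using hnoconsec 1
    simp only [Nat.testBit_eq_decide_div_mod_eq, Nat.reducePow, decide_eq_false_iff_not,
      Nat.mod_two_not_eq_one] at h2
    omega
  have hA := Nat.odd_choose_two_pow_sub_succ_div_two hr' hnoconsec
  have hB := Nat.even_choose_two_pow_sub_succ_div_two_add_one hr' h8
  have hodd := (hA.mul hA).add_even (hB.mul_left ((2 ^ (r + 1) - (n + 1)).choose (n / 2 - 1)))
  refine ⟨hodd, isLeast_div_two_of_odd ?_⟩
  obtain ⟨h1, h2⟩ : n / 2 - 1 + 1 = n / 2 ∧ n / 2 - 1 + 2 = n / 2 + 1 := by omega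
  rwa [h1, h2]

/-- Theorem 5.9, case a) with `p = 1` (`n ≡ 2 mod 4`, no two consecutive binary 1's):
`choose(m,n/2)^2 + choose(m,n/2-1)*choose(m,n/2+1)` is odd, and consequently `n/2` is
the least `L` such that for all `j ≥ L` with `2j+2 ≤ n` the number
`choose(m,j+1)^2 + choose(m,j)*choose(m,j+2)` is even. -/
theorem fold_thom_bound_case_a_p1 (n r : ℕ) (hn : 0 < n) (hmod : n % 4 = 2)
    (hnoconsec : ∀ j : ℕ, ¬(Nat.testBit n j = true ∧ Nat.testBit n (j + 1) = true))
    (hr : 2 ^ r ≤ n) (hr' : n < 2 ^ (r + 1))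
    (m : ℕ) (hm : m = 2 ^ (r + 1) - 1 - n) :
    Odd (Nat.choose m (n / 2) * Nat.choose m (n / 2) +
        Nat.choose m (n / 2 - 1) * Nat.choose m (n / 2 + 1)) ∧
      IsLeast {L : ℕ | ∀ j : ℕ, L ≤ j → 2 * j + 2 ≤ n →
        Even (Nat.choose m (j + 1) * Nat.choose m (j + 1) +
          Nat.choose m j * Nat.choose m (j + 2))} (n / 2) :=
  fold_thom_bound_case_a_p1_general n r hmod hnoconsec hr' m hm
end

section
/- Let u, a, b be natural numbers with b < 2^u and with the binary expansion of a containing no two consecutive 1's (i.e., for all j, not (Nat.testBit a j = true and Nat.testBit a (j+1) = true)). Set n = 2^u * (8a + 3) + b and kappa = 2^(u+2) * a + 2^u - 1 - b. Then the binomial coefficient choose(n + kappa, n) is odd, and the binomial coefficient choose(n + kappa + 1, n) is even. -/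
/-!
By Kummer's theorem the 2-adic valuation of `(m + k).choose m` is the number of carries in the
binary addition `m + k`, so the binomial coefficient is odd exactly when `m &&& k = 0`.
Split at bit `u + 2`: `n = 2^(u+2) * 2a + (3 * 2^u + b)` and
`kappa = 2^(u+2) * a + (2^u - 1 - b)`. The high parts `2a` and `a` are disjoint because `a` has
no two adjacent ones, and `2^u - 1 - b` is the complement of `b` among the lowest `u` bits.
Modulo `2^(u+1)`, on the other hand, `n` and `kappa + 1` are `2^u + b` and `2^u - b`, whose sum
`2^(u+1)` is a carry into bit `u + 1`.
-/

namespace Nat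

theorem add_eq_or_of_and_eq_zero {m k : ℕ} (h : m &&& k = 0) : m + k = m ||| k := by
  induction m using Nat.binaryRec generalizing k with
  | zero => simp
  | bit b m ih =>
    cases k using Nat.bitCasesOn with
    | bit b' k =>
      obtain ⟨hmk, hbb⟩ := bit_eq_zero_iff.mp (land_bit b m b' k ▸ h)
      rw [lor_bit, bit_val, bit_val, bit_val, ← ih hmk]
      cases b <;> cases b' <;> simp at hbb ⊢ <;> omega

theorem mod_two_pow_add_mod_two_pow_lt_of_and_eq_zero {m k : ℕ} (h : m &&& k = 0) (i : ℕ) :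
    m % 2 ^ i + k % 2 ^ i < 2 ^ i := by
  have hdisj : m % 2 ^ i &&& k % 2 ^ i = 0 := by rw [← and_mod_two_pow, h, zero_mod]
  rw [add_eq_or_of_and_eq_zero hdisj]
  exact or_lt_two_pow (mod_lt _ (Nat.two_pow_pos i)) (mod_lt _ (Nat.two_pow_pos i))

theorem odd_choose_add_of_and_eq_zero {m k : ℕ} (h : m &&& k = 0) : Odd ((m + k).choose m) := by
  have : Fact (Nat.Prime 2) := ⟨prime_two⟩
  have hval : padicValNat 2 ((k + m).choose m) = 0 := by
    rw [padicValNat_choose' (lt_add_one _), Finset.card_eq_zero, Finset.filter_eq_empty_iff]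
    exact fun i _ => not_le.mpr (mod_two_pow_add_mod_two_pow_lt_of_and_eq_zero h i)
  rw [← not_even_iff_odd, even_iff_two_dvd, add_comm,
    dvd_iff_padicValNat_ne_zero (choose_pos (le_add_left m k)).ne', not_ne_iff]
  exact hval

theorem even_choose_add_of_two_pow_le_mod_add_mod {m k i : ℕ}
    (h : 2 ^ i ≤ m % 2 ^ i + k % 2 ^ i) : Even ((m + k).choose m) := by
  have : Fact (Nat.Prime 2) := ⟨prime_two⟩
  have hi : i ≠ 0 := by rintro rfl; simp only [pow_zero, mod_one] at h; omega
  have hlog : i ≤ log 2 (k + m) :=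
    le_log_of_pow_le one_lt_two <|
      h.trans <| (add_le_add (mod_le m _) (mod_le k _)).trans_eq (add_comm m k)
  have hval : padicValNat 2 ((k + m).choose m) ≠ 0 := by
    rw [padicValNat_choose' (lt_add_one _)]
    exact Finset.card_ne_zero_of_mem
      (Finset.mem_filter.mpr ⟨Finset.mem_Ico.mpr ⟨by omega, by omega⟩, h⟩)
  rw [even_iff_two_dvd, add_comm]
  exact dvd_of_one_le_padicValNat (one_le_iff_ne_zero.mpr hval)

theorem two_pow_mul_add_and_two_pow_mul_add {k x y x' y' : ℕ} (hy : y < 2 ^ k) (hy' : y' < 2 ^ k) :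
    (2 ^ k * x + y) &&& (2 ^ k * x' + y') = 2 ^ k * (x &&& x') + (y &&& y') := by
  apply eq_of_testBit_eq
  intro j
  rw [testBit_and, testBit_two_pow_mul_add _ hy, testBit_two_pow_mul_add _ hy',
    testBit_two_pow_mul_add _ (and_lt_two_pow _ hy')]
  split_ifs <;> simp only [testBit_and]

theorem two_mul_and_self_eq_zero {a : ℕ}
    (h : ∀ j, ¬(a.testBit j = true ∧ a.testBit (j + 1) = true)) : 2 * a &&& a = 0 := by
  apply eq_of_testBit_eq
  rintro (_ | j)
  · simp
  · have := h j
    rw [testBit_and, zero_testBit, ← testBit_div_two, mul_div_cancel_left₀ _ two_ne_zero]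
    simpa using this

theorem and_two_pow_sub_one_sub_eq_zero {b u : ℕ} (hb : b < 2 ^ u) : b &&& (2 ^ u - 1 - b) = 0 := by
  apply eq_of_testBit_eq
  intro j
  rw [testBit_and, show 2 ^ u - 1 - b = 2 ^ u - (b + 1) by omega, testBit_two_pow_sub_succ hb,
    zero_testBit]
  cases b.testBit j <;> simp

end Nat

open Nat in
/-- Theorem 5.9, case d): for `n = 2^u (8a+3) + b` with `b < 2^u` and `a` having no
two consecutive binary 1's, and `kappa = 2^(u+2) a + 2^u - 1 - b`, the binomial
coefficient `choose (n+kappa) n` is odd while `choose (n+kappa+1) n` is even. -/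
theorem fold_thom_bound_case_d (u a b : ℕ) (hb : b < 2 ^ u)
    (hnoconsec : ∀ j : ℕ, ¬(Nat.testBit a j = true ∧ Nat.testBit a (j + 1) = true))
    (n kappa : ℕ) (hn : n = 2 ^ u * (8 * a + 3) + b)
    (hkappa : kappa = 2 ^ (u + 2) * a + (2 ^ u - 1 - b)) :
    Odd (Nat.choose (n + kappa) n) ∧ Even (Nat.choose (n + kappa + 1) n) := by
  have h4 : 2 ^ (u + 2) = 2 ^ u * 4 := by ring
  have h2 : 2 ^ (u + 1) * (2 * a) = 2 ^ (u + 2) * a := by ring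
  have hdisj : n &&& kappa = 0 := by
    rw [show n = 2 ^ (u + 2) * (2 * a) + (2 ^ u * 3 + b) by rw [hn]; ring,
      show kappa = 2 ^ (u + 2) * a + (2 ^ u * 0 + (2 ^ u - 1 - b)) by rw [hkappa]; ring,
      two_pow_mul_add_and_two_pow_mul_add (by omega) (by omega),
      two_pow_mul_add_and_two_pow_mul_add hb (by omega),
      two_mul_and_self_eq_zero hnoconsec, and_two_pow_sub_one_sub_eq_zero hb]
    simp
  have hcarry : 2 ^ (u + 1) ≤ n % 2 ^ (u + 1) + (kappa + 1) % 2 ^ (u + 1) := by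
    rw [show n = 2 ^ (u + 1) * (4 * a + 1) + (2 ^ u + b) by rw [hn]; ring,
      show kappa + 1 = 2 ^ (u + 1) * (2 * a) + (2 ^ u - b) by omega,
      mul_add_mod, mul_add_mod, mod_eq_of_lt (by omega), mod_eq_of_lt (by omega)]
    omega
  exact ⟨odd_choose_add_of_and_eq_zero hdisj, add_assoc n kappa 1 ▸
    even_choose_add_of_two_pow_le_mod_add_mod hcarry⟩
end

section
/- Let n be a positive even natural number whose binary expansion contains no two consecutive 1's, let p be the largest natural number with 2^p dividing n (so p >= 1), let r satisfy 2^r <= n < 2^(r+1), and set m = 2^(r+1) - 1 - n, c = n/2 - 2^(p-1) + 1, and q = 2^p - 2 (so that n = 2c + q). Let k >= 2 and let lambda_1 >= lambda_2 >= ... >= lambda_k >= 1 be a weakly decreasing sequence of positive natural numbers with lambda_2 >= c and lambda_1 + ... + lambda_k <= n. Let B be the k-by-k matrix over ZMod 2 whose (i,j) entry (for i, j = 1, ..., k) is choose(m, lambda_i + j - i) reduced mod 2 when lambda_i + j - i >= 0, and 0 when lambda_i + j - i < 0. Then det B = 1 if and only if there exists a natural number t with t <= q such that k = q - t + 2, lambda_1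 = c + t, lambda_2 = c, and lambda_i = 1 for all i with 3 <= i <= k. -/
/-!
No two consecutive ones and `2^p ∥ n` force `n = 2^(p+2) v + 2^p`; put `e = 2^(p+1) v`, so that
`n = 2e + 2^p` and `c = e + 1`. Since `m = 2^(r+1) - 1 - n` has the complementary bits of `n`,
Lucas's theorem makes `choose m a` odd exactly when the bits of `a` avoid those of `n`: it is odd
for `a < 2^p` and for `e ≤ a < e + 2^p`, and even for `a = e + 2^p`.

The bound `|λ| ≤ n` keeps the entries of row 0 in `[e + 1, e + 2^p]`, of row 1 in `[e, e + 2^p)`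
and of every later row in `[0, 2^p)`. So row 1 is all ones, row 0 is all ones unless its last entry
is `e + 2^p`, and row 2 is all ones as soon as `λ_2 ≥ 2`. Outside the shape
`(c + t, c, 1^(q - t))` two rows coincide; for that shape `B` is a staircase of determinant one.
-/

theorem Nat.odd_choose_iff_testBit_s9 (m a : ℕ) :
    Odd (m.choose a) ↔ ∀ i, a.testBit i → m.testBit i := by
  induction m using Nat.strong_induction_on generalizing a with
  | _ m ih =>
    rcases m.eq_zero_or_pos with rfl | hm
    · rcases a.eq_zero_or_pos with rfl | ha
      · simp
      · simp only [Nat.choose_eq_zero_of_lt ha, Nat.zero_testBit, Nat.not_odd_zero, false_iff]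
        exact fun h => ha.ne' (Nat.zero_of_testBit_eq_false fun i => by simpa using h i)
    · have : Fact (Nat.Prime 2) := ⟨Nat.prime_two⟩
      have lucas : m.choose a % 2 = ((m % 2).choose (a % 2) * (m / 2).choose (a / 2)) % 2 :=
        Choose.choose_modEq_choose_mod_mul_choose_div_nat
      have hbit0 : Odd ((m % 2).choose (a % 2)) ↔ (a.testBit 0 → m.testBit 0) := by
        rcases Nat.mod_two_eq_zero_or_one m with h | h <;>
          rcases Nat.mod_two_eq_zero_or_one a with h' | h' <;> simp [h, h']
      rw [Nat.odd_iff, lucas, ← Nat.odd_iff, Nat.odd_mul, hbit0, ih _ (by omega)]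
      simp only [Nat.testBit_div_two]
      exact ⟨fun ⟨h0, hs⟩ i => i.casesOn h0 hs, fun h => ⟨h 0, fun i => h (i + 1)⟩⟩

theorem Nat.lt_of_testBit_of_lt_two_pow {a p i : ℕ} (ha : a < 2 ^ p) (hi : a.testBit i) : i < p :=
  (Nat.pow_lt_pow_iff_right (by norm_num)).mp ((Nat.ge_two_pow_of_testBit hi).trans_lt ha)

theorem Nat.testBit_eq_false_of_two_pow_dvd {n p i : ℕ} (hpn : 2 ^ p ∣ n) (hi : i < p) :
    n.testBit i = false := by
  obtain ⟨u, rfl⟩ := hpn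
  simp [Nat.testBit_two_pow_mul, hi]

theorem Nat.odd_choose_two_pow_sub_one_sub_iff {n N a : ℕ} (hn : n < 2 ^ N) (ha : a < 2 ^ N) :
    Odd ((2 ^ N - 1 - n).choose a) ↔ ∀ i, a.testBit i → n.testBit i = false := by
  rw [Nat.odd_choose_iff_testBit_s9, show 2 ^ N - 1 - n = 2 ^ N - (n + 1) by omega]
  refine forall_congr' fun i => imp_congr_right fun hi => ?_
  simp [Nat.testBit_two_pow_sub_succ hn, Nat.lt_of_testBit_of_lt_two_pow ha hi]

theorem exists_eq_two_pow_mul_add_two_pow {n p : ℕ}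
    (hnoconsec : ∀ j, ¬(n.testBit j = true ∧ n.testBit (j + 1) = true))
    (hp : 2 ^ p ∣ n) (hp' : ¬ 2 ^ (p + 1) ∣ n) : ∃ v, n = 2 ^ (p + 2) * v + 2 ^ p := by
  obtain ⟨u, rfl⟩ := hp
  have hu : u % 2 = 1 := by
    by_contra h
    obtain ⟨w, rfl⟩ : 2 ∣ u := Nat.dvd_of_mod_eq_zero (by omega)
    exact hp' ⟨w, by ring⟩
  have hbits := hnoconsec p
  rw [Nat.testBit_two_pow_mul, Nat.testBit_two_pow_mul] at hbits
  simp only [le_refl, Nat.sub_self, Nat.testBit_zero, hu, decide_true, Bool.true_and, true_and,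
    Nat.le_add_right, Nat.add_sub_cancel_left, Nat.testBit_succ, decide_eq_true_eq] at hbits
  obtain ⟨v, rfl⟩ : ∃ v, u = 4 * v + 1 := ⟨u / 4, by omega⟩
  exact ⟨v, by ring⟩

section ComplementBinomials

variable {n p v N : ℕ}

theorem odd_choose_compl_of_lt_two_pow (hn : n < 2 ^ N) (hpn : 2 ^ p ∣ n) {a : ℕ}
    (ha : a < 2 ^ p) (haN : a < 2 ^ N) : Odd ((2 ^ N - 1 - n).choose a) :=
  (Nat.odd_choose_two_pow_sub_one_sub_iff hn haN).2 fun _ hi =>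
    Nat.testBit_eq_false_of_two_pow_dvd hpn (Nat.lt_of_testBit_of_lt_two_pow ha hi)

theorem odd_choose_compl_two_pow_mul_add (hn : n < 2 ^ N)
    (hnoconsec : ∀ j, ¬(n.testBit j = true ∧ n.testBit (j + 1) = true))
    (hnv : n = 2 ^ (p + 2) * v + 2 ^ p) {s : ℕ} (hs : s < 2 ^ p) :
    Odd ((2 ^ N - 1 - n).choose (2 ^ (p + 1) * v + s)) := by
  have hsp : s < 2 ^ (p + 1) := hs.trans (Nat.pow_lt_pow_right one_lt_two p.lt_succ_self)
  have hle : 2 ^ (p + 1) * v ≤ 2 ^ (p + 2) * v :=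
    Nat.mul_le_mul_right v (Nat.pow_le_pow_right two_pos (by omega))
  refine (Nat.odd_choose_two_pow_sub_one_sub_iff hn (by omega)).2 fun i hi => ?_
  rw [Nat.testBit_two_pow_mul_add _ hsp] at hi
  split_ifs at hi with hip
  · exact Nat.testBit_eq_false_of_two_pow_dvd ⟨4 * v + 1, by rw [hnv]; ring⟩
      (Nat.lt_of_testBit_of_lt_two_pow hs hi)
  · have hsucc : n.testBit (i + 1) = true := by
      rw [hnv, Nat.testBit_two_pow_mul_add _ (Nat.pow_lt_pow_right one_lt_two (by omega)),
        if_neg (by omega), show i + 1 - (p + 2) = i - (p + 1) by omega, hi]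
    simpa [hsucc] using hnoconsec i

theorem even_choose_compl_two_pow_mul_add_two_pow (hn : n < 2 ^ N)
    (hnv : n = 2 ^ (p + 2) * v + 2 ^ p) :
    Even ((2 ^ N - 1 - n).choose (2 ^ (p + 1) * v + 2 ^ p)) := by
  have hbit : ∀ w, (2 ^ (p + 1) * w + 2 ^ p).testBit p = true := fun w => by
    rw [Nat.testBit_two_pow_mul_add _ (Nat.pow_lt_pow_right one_lt_two p.lt_succ_self),
      if_pos p.lt_succ_self, Nat.testBit_two_pow_self]
  have hle : 2 ^ (p + 1) * v ≤ 2 ^ (p + 2) * v :=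
    Nat.mul_le_mul_right v (Nat.pow_le_pow_right two_pos (by omega))
  have hnp : n.testBit p = true := by
    rw [hnv, show 2 ^ (p + 2) * v = 2 ^ (p + 1) * (2 * v) by ring, hbit]
  rw [← Nat.not_odd_iff_even, Nat.odd_choose_two_pow_sub_one_sub_iff hn (by omega)]
  intro h
  simpa [hnp] using h p (hbit v)

end ComplementBinomials

open Finset

theorem Matrix.det_eq_neg_one_pow_of_staircase {R : Type*} [CommRing R] {k : ℕ}
    (A : Matrix (Fin (k + 2)) (Fin (k + 2)) R)
    (hA0 : ∀ j, A 0 j = if j = Fin.last (k + 1) then 0 else 1)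
    (hA : ∀ (i : Fin (k + 1)) j, A i.succ j = if (i : ℕ) ≤ j then 1 else 0) :
    A.det = (-1) ^ k := by
  -- row 0 minus row 1 is minus the last unit vector; expanding along it leaves an upper
  -- unitriangular minor
  have hrow : A 0 + (-1 : R) • A 1 = Pi.single (Fin.last (k + 1)) (-1) := by
    ext j
    have h1 : A 1 j = 1 := by simpa using hA 0 j
    rw [Pi.add_apply, Pi.smul_apply, hA0, h1]
    split_ifs with hj <;> simp [hj]
  have hminor : (A.submatrix Fin.succ Fin.castSucc).det = 1 := by
    rw [det_of_isUpperTriangular]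
    · simp [hA]
    · intro i j (hji : j < i)
      simp [hA, not_le.mpr hji]
  rw [← det_updateRow_add_smul_self A (Fin.zero_ne_one' (n := k + 1)) (-1), hrow,
    det_succ_row_zero, Fintype.sum_eq_single (Fin.last (k + 1))]
  · rw [← Fin.succAbove_zero, submatrix_updateRow_succAbove, Fin.succAbove_zero,
      Fin.succAbove_last, hminor, updateRow_self, Pi.single_eq_same, Fin.val_last]
    ring
  · intro j hj
    simp [hj]

theorem Finset.sum_add_card_compl_le_sum {ι : Type*} [Fintype ι] [DecidableEq ι] {f : ι → ℕ}
    (hf : ∀ i, 1 ≤ f i) (s : Finset ι) : ∑ i ∈ s, f i + #sᶜ ≤ ∑ i, f i := by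
  rw [← s.sum_add_sum_compl f]
  gcongr
  simpa using sᶜ.card_nsmul_le_sum f 1 fun i _ => hf i

def jacobiTrudi {R : Type*} [Zero R] {k : ℕ} (f : ℕ → R) (lam : Fin k → ℕ) :
    Matrix (Fin k) (Fin k) R :=
  Matrix.of fun i j => if (i : ℕ) ≤ lam i + j then f (lam i + j - i) else 0

theorem jacobiTrudi_apply {R : Type*} [Zero R] {k : ℕ} (f : ℕ → R) (lam : Fin k → ℕ)
    (i j : Fin k) :
    jacobiTrudi f lam i j = if (i : ℕ) ≤ lam i + j then f (lam i + j - i) else 0 :=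
  rfl

section JacobiTrudi

variable {k : ℕ} {lam : Fin (k + 2) → ℕ}

theorem partition_bounds_of_sum_le {e Q : ℕ} (hdec : Antitone lam) (hpos : ∀ i, 1 ≤ lam i)
    (hlam1 : e + 1 ≤ lam 1) (hsum : ∑ i, lam i ≤ 2 * e + Q) :
    e + 1 ≤ lam 0 ∧ lam 0 + lam 1 + k ≤ 2 * e + Q ∧
      ∀ i : Fin (k + 2), 2 ≤ (i : ℕ) → lam i + k < Q := by
  have h01 : lam 1 ≤ lam 0 := hdec (Fin.zero_le 1)
  have hpair : lam 0 + lam 1 + k ≤ 2 * e + Q := by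
    have := sum_add_card_compl_le_sum hpos {0, 1}
    rw [sum_pair Fin.zero_ne_one, card_compl, card_pair Fin.zero_ne_one, Fintype.card_fin] at this
    omega
  refine ⟨by omega, hpair, fun i hi => ?_⟩
  have hi0 : i ≠ 0 := fun h => by simp [h] at hi
  have hi1 : i ≠ 1 := fun h => by simp [h] at hi
  have := sum_add_card_compl_le_sum hpos {0, 1, i}
  rw [sum_insert (by simp [hi0.symm]), sum_pair hi1.symm, card_compl,
    card_insert_of_notMem (by simp [hi0.symm]), card_pair hi1.symm,
    Fintype.card_fin] at this
  omega

variable {R : Type*} {f : ℕ → R}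

theorem jacobiTrudi_one_apply [Zero R] [One R] {e Q : ℕ} (hmid : ∀ s < Q, f (e + s) = 1)
    (hlo : e + 1 ≤ lam 1) (hhi : lam 1 + k < e + Q) (j : Fin (k + 2)) :
    jacobiTrudi f lam 1 j = 1 := by
  have hj := j.isLt
  rw [jacobiTrudi_apply, Fin.val_one, if_pos (by omega),
    show lam 1 + j - 1 = e + (lam 1 + j - 1 - e) by omega]
  exact hmid _ (by omega)

theorem jacobiTrudi_zero_apply [Zero R] [One R] {e Q : ℕ} (hmid : ∀ s < Q, f (e + s) = 1)
    (hgap : f (e + Q) = 0)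
    (hlo : e + 1 ≤ lam 0) (hhi : lam 0 + (k + 1) ≤ e + Q) (j : Fin (k + 2)) :
    jacobiTrudi f lam 0 j = if lam 0 + j = e + Q then 0 else 1 := by
  have hj := j.isLt
  rw [jacobiTrudi_apply, Fin.val_zero, if_pos (Nat.zero_le _), Nat.sub_zero]
  split_ifs with h
  · rwa [h]
  · rw [show lam 0 + j = e + (lam 0 + j - e) by omega]
    exact hmid _ (by omega)

theorem jacobiTrudi_apply_of_two_le [Zero R] [One R] {Q : ℕ} (hlow : ∀ a < Q, f a = 1)
    {i : Fin (k + 2)} (hi : 2 ≤ (i : ℕ)) (hhi : lam i + k < Q) (j : Fin (k + 2)) :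
    jacobiTrudi f lam i j = if (i : ℕ) ≤ lam i + j then 1 else 0 := by
  have hj := j.isLt
  rw [jacobiTrudi_apply]
  split_ifs
  · exact hlow _ (by omega)
  · rfl

theorem det_jacobiTrudi_eq_one_iff [CommRing R] [Nontrivial R] [CharP R 2] {e Q : ℕ}
    (hlow : ∀ a < Q, f a = 1) (hmid : ∀ s < Q, f (e + s) = 1) (hgap : f (e + Q) = 0)
    (hdec : Antitone lam) (hpos : ∀ i, 1 ≤ lam i) (hlam1 : e + 1 ≤ lam 1)
    (hsum : ∑ i, lam i ≤ 2 * e + Q) :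
    (jacobiTrudi f lam).det = 1 ↔
      lam 0 + (k + 1) = e + Q ∧ lam 1 = e + 1 ∧
        ∀ i : Fin (k + 2), 2 ≤ (i : ℕ) → lam i = 1 := by
  obtain ⟨hlam0, hpair, hhi⟩ := partition_bounds_of_sum_le hdec hpos hlam1 hsum
  have row1 := jacobiTrudi_one_apply hmid hlam1 (by omega)
  have row0 := jacobiTrudi_zero_apply hmid hgap hlam0 (by omega)
  have row := fun i hi => jacobiTrudi_apply_of_two_le hlow (i := i) hi (hhi i hi)
  by_cases h0 : lam 0 + (k + 1) = e + Q
  · by_cases hrest : ∀ i : Fin (k + 2), 2 ≤ (i : ℕ) → lam i = 1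
    · refine iff_of_true ?_ ⟨h0, by omega, hrest⟩
      rw [Matrix.det_eq_neg_one_pow_of_staircase, CharTwo.neg_eq, one_pow]
      · intro j
        simp only [row0, ← h0, Nat.add_left_cancel_iff, Fin.ext_iff, Fin.val_last]
      · intro i j
        by_cases hi : (i : ℕ) = 0
        · rw [show i.succ = 1 from Fin.ext (by simp [hi]), row1, if_pos (by omega)]
        · rw [row _ (by simp; omega), hrest _ (by simp; omega), Fin.val_succ]
          congr 1
          exact propext (by omega)
    · push Not at hrest
      obtain ⟨i, hi, hlami⟩ := hrest
      have h2 : (2 : ℕ) < k + 2 := by omega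
      have hlam2 : 2 ≤ lam ⟨2, h2⟩ :=
        ((hpos i).lt_of_ne' hlami).trans_le (hdec (Fin.mk_le_mk.mpr hi))
      have hrows : jacobiTrudi f lam ⟨2, h2⟩ = jacobiTrudi f lam 1 := by
        funext j
        rw [row _ le_rfl, row1, if_pos (by simp; omega)]
      refine iff_of_false ?_ (fun h => hlami (h.2.2 i hi))
      rw [Matrix.det_zero_of_row_eq (by simp [Fin.ext_iff]) hrows]
      exact zero_ne_one
  · have hrows : jacobiTrudi f lam 0 = jacobiTrudi f lam 1 := by
      funext j
      rw [row0, row1, if_neg (by omega)]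
    refine iff_of_false ?_ (fun h => h0 h.1)
    rw [Matrix.det_zero_of_row_eq Fin.zero_ne_one hrows]
    exact zero_ne_one

end JacobiTrudi

/-- Proposition 5.11 (prop:avoiding_obstructions), stated arithmetically: for even
`n > 0` with no two consecutive binary 1's, `p` the 2-adic valuation of `n`,
`m = 2^(r+1)-1-n`, `c = n/2 - 2^(p-1) + 1` and `q = 2^p - 2`, a Jacobi-Trudi
determinant `det (choose m (lambda_i + j - i))` over `ZMod 2` (entries `0` when
`lambda_i + j - i < 0`) for a partition `lambda` of length `k ≥ 2` with
`lambda_2 ≥ c` and `|lambda| ≤ n` equals `1` iff `lambda = (c+t, c, 1^(q-t))`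
for some `t ≤ q`. -/
theorem schur_obstructions_on_RPn (n p r : ℕ)
    (hnoconsec : ∀ j : ℕ, ¬(Nat.testBit n j = true ∧ Nat.testBit n (j + 1) = true))
    (hp : 2 ^ p ∣ n) (hp' : ¬ 2 ^ (p + 1) ∣ n) (hp1 : 1 ≤ p)
    (hr' : n < 2 ^ (r + 1))
    (m c q : ℕ) (hm : m = 2 ^ (r + 1) - 1 - n)
    (hc : c = n / 2 - 2 ^ (p - 1) + 1) (hq : q = 2 ^ p - 2)
    (k : ℕ) (hk : 2 ≤ k)
    (lam : Fin k → ℕ) (hdec : Antitone lam) (hpos : ∀ i, 1 ≤ lam i)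
    (hlam2 : c ≤ lam ⟨1, by omega⟩) (hsum : ∑ i, lam i ≤ n)
    (B : Matrix (Fin k) (Fin k) (ZMod 2))
    (hB : ∀ i j : Fin k, B i j =
      if (i : ℕ) ≤ lam i + (j : ℕ) then
        ((Nat.choose m (lam i + (j : ℕ) - (i : ℕ)) : ZMod 2)) else 0) :
    B.det = 1 ↔
      ∃ t : ℕ, t ≤ q ∧ k = q - t + 2 ∧
        lam ⟨0, by omega⟩ = c + t ∧ lam ⟨1, by omega⟩ = c ∧
        ∀ i : Fin k, 2 ≤ (i : ℕ) → lam i = 1 := by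
  obtain ⟨k, rfl⟩ : ∃ k', k = k' + 2 := ⟨k - 2, by omega⟩
  obtain ⟨v, hv⟩ := exists_eq_two_pow_mul_add_two_pow hnoconsec hp hp'
  have hpow : 2 ^ p = 2 * 2 ^ (p - 1) := by rw [← pow_succ']; congr 1; omega
  have hv2 : 2 ^ (p + 2) * v = 2 * (2 ^ (p + 1) * v) := by ring
  have hce : c = 2 ^ (p + 1) * v + 1 := by omega
  have hlam0 : c ≤ lam 0 := hlam2.trans (hdec (Fin.zero_le _))
  subst hm
  obtain rfl : B = jacobiTrudi (fun a => ((2 ^ (r + 1) - 1 - n).choose a : ZMod 2)) lam :=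
    Matrix.ext hB
  have hlow : ∀ a < 2 ^ p, ((2 ^ (r + 1) - 1 - n).choose a : ZMod 2) = 1 := fun a ha =>
    ZMod.natCast_eq_one_iff_odd.2 (odd_choose_compl_of_lt_two_pow hr' hp ha (by omega))
  have hmid : ∀ s < 2 ^ p, ((2 ^ (r + 1) - 1 - n).choose (2 ^ (p + 1) * v + s) : ZMod 2) = 1 :=
    fun s hs => ZMod.natCast_eq_one_iff_odd.2 (odd_choose_compl_two_pow_mul_add hr' hnoconsec hv hs)
  have hgap := ZMod.natCast_eq_zero_iff_even.2 (even_choose_compl_two_pow_mul_add_two_pow hr' hv)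
  simp only [Fin.zero_eta, Fin.mk_one] at hlam2 ⊢
  rw [det_jacobiTrudi_eq_one_iff hlow hmid hgap hdec hpos (by omega) (by omega)]
  constructor
  · rintro ⟨h0, h1, hrest⟩
    exact ⟨lam 0 - c, by omega, by omega, by omega, by omega, hrest⟩
  · rintro ⟨t, ht, hkt, h0, h1, hrest⟩
    exact ⟨by omega, by omega, hrest⟩
end
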